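/- Let B be the flat algebra over a field F (char F ≠ 2, char F = p > 0) with basis {a,b,v}, a² = a, b² = b, ab = v, av = bv = (1/2)v, v² = 0. Let G be the group of bijections of B generated by τ_a and τ_b (Miyamoto involutions, τ_c(x) = x + 4(c,x)c − 4cx with the Frobenius form as above). Then the orbit of a under G is exactly {a + 4k·v : k ∈ ℤ} = {a_{4k}}, and this orbit is finite if and only if char F = p > 0, in which case it has exactly p elements. -/
import Mathlib


/-- The flat algebra `J(0)` on basis `{a, b, v}` realized on `F × F × F`
(coordinates: coefficient of `a`, of `b`, of `v`), with multiplication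
`a·a = a`, `b·b = b`, `a·b = v`, `a·v = (1/2)v`, `b·v = (1/2)v`, `v·v = 0`. -/
def fmul {F : Type*} [Field F] (x y : F × F × F) : F × F × F :=
  (x.1 * y.1, x.2.1 * y.2.1,
   x.1 * y.2.1 + x.2.1 * y.1 + (x.1 * y.2.2 + x.2.2 * y.1) / 2
     + (x.2.1 * y.2.2 + x.2.2 * y.2.1) / 2)

/-- Frobenius form: `(a,a) = (b,b) = 1`, all other pairings of basis vectors `0`. -/
def fform {F : Type*} [Field F] (x y : F × F × F) : F :=
  x.1 * y.1 + x.2.1 * y.2.1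

/-- Miyamoto map `τ_c(x) = x + 4(c,x)c − 4·c·x`, as an element of `Function.End`. -/
def ftau {F : Type*} [Field F] (c : F × F × F) : Function.End (F × F × F) :=
  fun x => x + (4 * fform c x) • c - (4 : F) • fmul c x

/-- The orbit of the axis `a = (1,0,0)` under the group generated by the Miyamoto
involutions `τ_a` and `τ_b` (these are involutions, so the monoid they generate is
the group they generate). -/
def forbit (F : Type*) [Field F] : Set (F × F × F) :=
  {y | ∃ f ∈ Submonoid.closure ({ftau ((1 : F), (0 : F), (0 : F)),
      ftau ((0 : F), (1 : F), (0 : F))} : Set (Function.End (F × F × F))),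
    f • (((1 : F), (0 : F), (0 : F)) : F × F × F) = y}

section Aux8
variable {F : Type*} [Field F]

lemma tauA (h2 : (2:F) ≠ 0) (t : F) :
    ftau ((1:F),(0:F),(0:F)) ((1:F),(0:F),t) = ((1:F),(0:F),-t) := by
  simp [ftau, fform, fmul, Prod.ext_iff]; field_simp; ring

lemma tauB (h2 : (2:F) ≠ 0) (t : F) :
    ftau ((0:F),(1:F),(0:F)) ((1:F),(0:F),t) = ((1:F),(0:F),-4-t) := by
  simp [ftau, fform, fmul, Prod.ext_iff]; field_simp; ring

lemma powAB (h2 : (2:F) ≠ 0) (n : ℕ) (t : F) :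
    ((ftau ((1:F),(0:F),(0:F)) * ftau ((0:F),(1:F),(0:F)))^n : Function.End (F × F × F))
      ((1:F),(0:F),t) = ((1:F),(0:F), t + 4*n) := by
  induction n generalizing t with
  | zero => show ((1:F),(0:F),t) = _; norm_num
  | succ n ih =>
    rw [pow_succ]
    show ((ftau ((1:F),(0:F),(0:F)) * ftau ((0:F),(1:F),(0:F)))^n : Function.End (F × F × F))
      ((ftau ((1:F),(0:F),(0:F)) * ftau ((0:F),(1:F),(0:F)) : Function.End (F × F × F))
        ((1:F),(0:F),t)) = _
    have : (ftau ((1:F),(0:F),(0:F)) * ftau ((0:F),(1:F),(0:F)) : Function.End (F × F × F))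
        ((1:F),(0:F),t) = ((1:F),(0:F), t + 4) := by
      show ftau ((1:F),(0:F),(0:F)) (ftau ((0:F),(1:F),(0:F)) ((1:F),(0:F),t)) = _
      rw [tauB h2, tauA h2]; ring_nf
    rw [this, ih]
    push_cast; ring_nf

lemma powBA (h2 : (2:F) ≠ 0) (n : ℕ) (t : F) :
    ((ftau ((0:F),(1:F),(0:F)) * ftau ((1:F),(0:F),(0:F)))^n : Function.End (F × F × F))
      ((1:F),(0:F),t) = ((1:F),(0:F), t - 4*n) := by
  induction n generalizing t with
  | zero => show ((1:F),(0:F),t) = _; norm_num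
  | succ n ih =>
    rw [pow_succ]
    show ((ftau ((0:F),(1:F),(0:F)) * ftau ((1:F),(0:F),(0:F)))^n : Function.End (F × F × F))
      ((ftau ((0:F),(1:F),(0:F)) * ftau ((1:F),(0:F),(0:F)) : Function.End (F × F × F))
        ((1:F),(0:F),t)) = _
    have : (ftau ((0:F),(1:F),(0:F)) * ftau ((1:F),(0:F),(0:F)) : Function.End (F × F × F))
        ((1:F),(0:F),t) = ((1:F),(0:F), t - 4) := by
      show ftau ((0:F),(1:F),(0:F)) (ftau ((1:F),(0:F),(0:F)) ((1:F),(0:F),t)) = _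
      rw [tauA h2, tauB h2]; ring_nf
    rw [this, ih]
    push_cast; ring_nf

lemma forbit_eq (h2 : (2:F) ≠ 0) :
    forbit F = {y | ∃ k : ℤ, y = ((1 : F), (0 : F), 4 * (k : F))} := by
  ext y
  constructor
  · rintro ⟨f, hf, rfl⟩
    have key : ∀ g ∈ Submonoid.closure ({ftau ((1 : F), (0 : F), (0 : F)),
        ftau ((0 : F), (1 : F), (0 : F))} : Set (Function.End (F × F × F))),
        ∀ k : ℤ, ∃ k' : ℤ, g ((1:F),(0:F),4*(k:F)) = ((1:F),(0:F),4*(k':F)) := by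
      intro g hg
      induction hg using Submonoid.closure_induction with
      | mem x hx =>
        intro k
        rcases hx with rfl | rfl
        · exact ⟨-k, by rw [tauA h2]; push_cast; ring_nf⟩
        · exact ⟨-1-k, by rw [tauB h2]; push_cast; ring_nf⟩
      | one => exact fun k => ⟨k, rfl⟩
      | mul x y hx hy ihx ihy =>
        intro k
        obtain ⟨k1, hk1⟩ := ihy k
        obtain ⟨k2, hk2⟩ := ihx k1
        exact ⟨k2, by show x (y _) = _; rw [hk1, hk2]⟩
    obtain ⟨k', hk'⟩ := key f hf 0
    refine ⟨k', ?_⟩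
    have : f • (((1:F),(0:F),(0:F)) : F × F × F) = f ((1:F),(0:F),(0:F)) := rfl
    rw [this]
    simpa using hk'
  · rintro ⟨k, rfl⟩
    rcases le_or_gt 0 k with hk | hk
    · lift k to ℕ using hk
      refine ⟨(ftau ((1:F),(0:F),(0:F)) * ftau ((0:F),(1:F),(0:F)))^k,
        pow_mem (mul_mem (Submonoid.subset_closure (by simp))
          (Submonoid.subset_closure (by simp))) k, ?_⟩
      show ((ftau ((1:F),(0:F),(0:F)) * ftau ((0:F),(1:F),(0:F)))^k : Function.End (F × F × F))
        ((1:F),(0:F),(0:F)) = _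
      rw [powAB h2]; push_cast; ring_nf
    · obtain ⟨n, rfl⟩ : ∃ n : ℕ, k = -n := ⟨k.natAbs, by omega⟩
      refine ⟨(ftau ((0:F),(1:F),(0:F)) * ftau ((1:F),(0:F),(0:F)))^n,
        pow_mem (mul_mem (Submonoid.subset_closure (by simp))
          (Submonoid.subset_closure (by simp))) n, ?_⟩
      show ((ftau ((0:F),(1:F),(0:F)) * ftau ((1:F),(0:F),(0:F)))^n : Function.End (F × F × F))
        ((1:F),(0:F),(0:F)) = _
      rw [powBA h2]; push_cast; ring_nf


lemma card_stuff (h2 : (2:F) ≠ 0) :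
    (({y | ∃ k : ℤ, y = ((1 : F), (0 : F), 4 * (k : F))} : Set (F × F × F)).Finite
      ↔ ringChar F ≠ 0) ∧
    (∀ p : ℕ, p ≠ 0 → ringChar F = p →
      ({y | ∃ k : ℤ, y = ((1 : F), (0 : F), 4 * (k : F))} : Set (F × F × F)).ncard = p) := by
  have h4 : (4:F) ≠ 0 := by
    intro h; apply h2
    have : (2:F)*2 = 0 := by rw [← h]; norm_num
    rcases mul_eq_zero.1 this with h | h <;> exact h
  set S : Set (F × F × F) := {y | ∃ k : ℤ, y = ((1 : F), (0 : F), 4 * (k : F))} with hS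
  set R : Set F := Set.range (Int.cast : ℤ → F) with hR
  have hinj : Function.Injective (fun t : F => (((1:F),(0:F),4*t) : F × F × F)) := by
    intro s t h
    simpa [Prod.ext_iff, h4] using h
  have himg : S = (fun t : F => (((1:F),(0:F),4*t) : F × F × F)) '' R := by
    ext y
    simp only [hS, hR, Set.mem_setOf_eq, Set.mem_image, Set.mem_range]
    constructor
    · rintro ⟨k, rfl⟩; exact ⟨k, ⟨k, rfl⟩, rfl⟩
    · rintro ⟨t, ⟨k, rfl⟩, rfl⟩; exact ⟨k, rfl⟩
  have hfin : S.Finite ↔ R.Finite := by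
    rw [himg]
    constructor
    · intro h; exact Set.Finite.of_finite_image h (hinj.injOn)
    · exact Set.Finite.image _
  have hcard : S.ncard = R.ncard := by
    rw [himg, Set.ncard_image_of_injective _ hinj]
  constructor
  · rw [hfin]
    constructor
    · intro hf h0
      have : CharP F 0 := by rw [← h0]; exact ringChar.charP F
      have : CharZero F := CharP.charP_to_charZero F
      exact (Set.infinite_range_of_injective Int.cast_injective) hf
    · intro hp
      set p := ringChar F
      have hc : CharP F p := ringChar.charP F
      have hprime : p.Prime := (CharP.char_is_prime_or_zero F p).resolve_right hp
      have : NeZero p := ⟨hp⟩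
      have hRr : R = Set.range (ZMod.castHom (dvd_refl p) F) := by
        ext x
        simp only [hR, Set.mem_range]
        constructor
        · rintro ⟨k, rfl⟩; exact ⟨(k : ZMod p), map_intCast _ k⟩
        · rintro ⟨z, rfl⟩
          obtain ⟨k, rfl⟩ := ZMod.intCast_surjective z
          exact ⟨k, (map_intCast _ k).symm⟩
      rw [hRr]
      exact Set.finite_range _
  · intro p hp hpc
    have hc : CharP F p := by rw [← hpc]; exact ringChar.charP F
    have hprime : p.Prime := (CharP.char_is_prime_or_zero F p).resolve_right (by
      intro h; exact hp (by omega))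
    have : NeZero p := ⟨hp⟩
    have hRr : R = Set.range (ZMod.castHom (dvd_refl p) F) := by
      ext x
      simp only [hR, Set.mem_range]
      constructor
      · rintro ⟨k, rfl⟩; exact ⟨(k : ZMod p), map_intCast _ k⟩
      · rintro ⟨z, rfl⟩
        obtain ⟨k, rfl⟩ := ZMod.intCast_surjective z
        exact ⟨k, (map_intCast _ k).symm⟩
    have hZinj : Function.Injective (ZMod.castHom (dvd_refl p) F) :=
      ZMod.castHom_injective F
    rw [hcard, hRr, ← Set.image_univ, Set.ncard_image_of_injective _ hZinj,
      Set.ncard_univ, Nat.card_zmod]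

end Aux8

/-- the orbit of `a` is `{a + 4k·v : k ∈ ℤ}`; it is finite iff
`char F = p > 0`, in which case it has exactly `p` elements. -/
theorem stmt_8 {F : Type*} [Field F] (hchar : (2 : F) ≠ 0) :
    forbit F = {y | ∃ k : ℤ, y = ((1 : F), (0 : F), 4 * (k : F))} ∧
    ((forbit F).Finite ↔ ringChar F ≠ 0) ∧
    (∀ p : ℕ, p ≠ 0 → ringChar F = p → (forbit F).ncard = p) := by
  obtain ⟨hfin, hcard⟩ := card_stuff hchar
  exact ⟨forbit_eq hchar, by rw [forbit_eq hchar]; exact hfin,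
    fun p hp hpc => by rw [forbit_eq hchar]; exact hcard p hp hpc⟩
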